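/- For every positive integer n and z ∈ ℂ \ (-∞,0], one has ζ_H(n+1, z) = ((-1)^{n+1}/n!) · ψ^{(n)}(z), where ψ is the digamma function. -/

import Mathlib

/-!
Put `ℓ_N(z) = z log N + log N! - ∑_{k ≤ N} log (z + k)`, a logarithm of Euler's `GammaSeq z N`.
Its increments `ℓ_{N+1}(z) - ℓ_N(z) = z (log (N+1) - log N - 1/(N+1)) - (log (1 + w) - w)`,
`w = z/(N+1)`, are `O(N⁻²)` uniformly on compact sets, so `ℓ_N` converges locally uniformly on the
slit plane to a holomorphic `L` with `Γ = exp ∘ L`, whence `ψ = L'`. By Weierstrass' theorem the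
derivatives of every order converge too, and for `n ≥ 1` the `(n+1)`-st derivative of `ℓ_N` is
`(-1)^(n+1) n! ∑_{k ≤ N} (z + k)^(-(n+1))`.
-/

/-- The digamma function `ψ = Γ'/Γ`. -/
noncomputable def digammaC (z : ℂ) : ℂ := deriv Complex.Gamma z / Complex.Gamma z

open Complex Filter Finset Topology

section UniformLimits

variable {α E : Type*} [NormedAddCommGroup E] [CompleteSpace E]

theorem tendstoUniformlyOn_of_norm_succ_sub_le {F : ℕ → α → E} {u : ℕ → ℝ} {s : Set α}
    (hu : Summable u) (h : ∀ᶠ n in atTop, ∀ x ∈ s, ‖F (n + 1) x - F n x‖ ≤ u n) :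
    TendstoUniformlyOn F (fun x ↦ F 0 x + ∑' n, (F (n + 1) x - F n x)) atTop s := by
  have hsum := Metric.tendstoUniformlyOn_iff.mp (tendstoUniformlyOn_tsum_nat_eventually hu h)
  refine Metric.tendstoUniformlyOn_iff.mpr fun ε hε ↦ ?_
  filter_upwards [hsum ε hε] with N hN x hx
  rw [← add_sub_cancel (F 0 x) (F N x), ← Finset.sum_range_sub (F · x), dist_add_left]
  exact hN x hx

theorem exists_tendstoLocallyUniformlyOn_of_norm_succ_sub_le [TopologicalSpace α]
    [LocallyCompactSpace α] {F : ℕ → α → E} {U : Set α} (hU : IsOpen U)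
    (h : ∀ K ⊆ U, IsCompact K → ∃ u : ℕ → ℝ, Summable u ∧
      ∀ᶠ n in atTop, ∀ x ∈ K, ‖F (n + 1) x - F n x‖ ≤ u n) :
    ∃ f, TendstoLocallyUniformlyOn F f atTop U := by
  refine ⟨fun x ↦ F 0 x + ∑' n, (F (n + 1) x - F n x),
    (tendstoLocallyUniformlyOn_iff_forall_isCompact hU).mpr fun K hKU hK ↦ ?_⟩
  obtain ⟨u, hu, hFu⟩ := h K hKU hK
  exact tendstoUniformlyOn_of_norm_succ_sub_le hu hFu

end UniformLimits

theorem TendstoLocallyUniformlyOn.iteratedDeriv {E ι : Type*} [NormedAddCommGroup E]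
    [NormedSpace ℂ E] [CompleteSpace E] {φ : Filter ι} {F : ι → ℂ → E} {f : ℂ → E} {U : Set ℂ}
    (hf : TendstoLocallyUniformlyOn F f φ U) (hF : ∀ᶠ i in φ, DifferentiableOn ℂ (F i) U)
    (hU : IsOpen U) (m : ℕ) :
    TendstoLocallyUniformlyOn (fun i ↦ iteratedDeriv m (F i)) (iteratedDeriv m f) φ U := by
  induction m with
  | zero => simpa using hf
  | succ m ih =>
    simp only [iteratedDeriv_succ]
    refine ih.deriv ?_ hU
    filter_upwards [hF] with i hFi
    rw [iteratedDeriv_eq_iterate]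
    exact ((hFi.analyticOnNhd hU).iterated_deriv m).differentiableOn

theorem iteratedDeriv_inv_add_const {𝕜 : Type*} [NontriviallyNormedField 𝕜] (n : ℕ) (a z : 𝕜) :
    iteratedDeriv n (fun w ↦ (w + a)⁻¹) z = (-1) ^ n * n.factorial * ((z + a) ^ (n + 1))⁻¹ := by
  rw [iteratedDeriv_comp_add_const n Inv.inv a, iteratedDeriv_eq_iterate]
  dsimp only
  rw [iter_deriv_inv,
    show (-1 - n : ℤ) = -((n + 1 : ℕ) : ℤ) by push_cast; ring, zpow_neg, zpow_natCast]

theorem summable_inv_add_natCast_pow {m : ℕ} (hm : 2 ≤ m) (z : ℂ) :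
    Summable fun k : ℕ ↦ ((z + k) ^ m)⁻¹ := by
  refine .of_norm_bounded_eventually_nat ((Real.summable_nat_pow_inv.mpr hm).mul_left (2 ^ m)) ?_
  filter_upwards [eventually_ge_atTop ⌈2 * ‖z‖⌉₊, eventually_gt_atTop 0] with k hkz hk
  have hk' : 2 * ‖z‖ ≤ k := Nat.ceil_le.mp hkz
  have hnorm : (k : ℝ) / 2 ≤ ‖z + k‖ := by
    have := norm_sub_norm_le (k : ℂ) (-z)
    rw [norm_neg, sub_neg_eq_add, add_comm, Complex.norm_natCast] at this
    linarith
  have hk2 : (0 : ℝ) < k / 2 := by positivity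
  calc ‖((z + k) ^ m)⁻¹‖ = (‖z + k‖ ^ m)⁻¹ := by rw [norm_inv, norm_pow]
    _ ≤ (((k : ℝ) / 2) ^ m)⁻¹ := by gcongr
    _ = 2 ^ m * ((k : ℝ) ^ m)⁻¹ := by rw [div_pow, inv_div, div_eq_mul_inv]

theorem Real.abs_log_add_one_sub_log_sub_inv_le {x : ℝ} (hx : 0 < x) :
    |Real.log (x + 1) - Real.log x - (x + 1)⁻¹| ≤ (x ^ 2)⁻¹ := by
  have hx1 : 0 < x + 1 := by linarith
  have hq : 0 < (x + 1) / x := by positivity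
  have hupper := Real.log_le_sub_one_of_pos hq
  have hlower := Real.one_sub_inv_le_log_of_pos hq
  rw [Real.log_div hx1.ne' hx.ne'] at hupper hlower
  have e1 : (x + 1) / x - 1 = x⁻¹ := by field_simp; ring
  have e2 : 1 - ((x + 1) / x)⁻¹ = (x + 1)⁻¹ := by field_simp; ring
  have e3 : x⁻¹ - (x + 1)⁻¹ ≤ (x ^ 2)⁻¹ := by
    rw [inv_sub_inv hx.ne' hx1.ne', ← one_div, div_le_div_iff₀ (by positivity) (by positivity)]
    nlinarith
  rw [abs_le]
  constructor <;> linarith [inv_nonneg.mpr (sq_nonneg x)]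

theorem add_natCast_mem_slitPlane {z : ℂ} (hz : z ∈ slitPlane) (k : ℕ) : z + k ∈ slitPlane := by
  rw [mem_slitPlane_iff] at hz ⊢
  simp only [add_re, natCast_re, add_im, natCast_im, add_zero]
  exact hz.imp (fun h ↦ by positivity) id

theorem ne_neg_natCast_of_mem_slitPlane {z : ℂ} (hz : z ∈ slitPlane) (m : ℕ) : z ≠ -m := by
  rintro rfl
  exact (neg_ofReal_mem_slitPlane.mp (by simpa using hz)).not_ge m.cast_nonneg

noncomputable def logGammaSeq (N : ℕ) (z : ℂ) : ℂ :=
  z * Real.log N + Real.log N.factorial - ∑ k ∈ range (N + 1), log (z + k)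

theorem exp_logGammaSeq {N : ℕ} (hN : N ≠ 0) {z : ℂ} (hz : ∀ m : ℕ, z ≠ -m) :
    exp (logGammaSeq N z) = GammaSeq z N := by
  have hzk (k : ℕ) : z + k ≠ 0 := by
    rw [← sub_neg_eq_add]
    exact sub_ne_zero.mpr (hz k)
  rw [logGammaSeq, exp_sub, exp_add, exp_sum, GammaSeq, cpow_def_of_ne_zero (by simpa using hN),
    ← ofReal_exp, Real.exp_log (by positivity), ← natCast_log, mul_comm z]
  simp only [exp_log (hzk _), ofReal_natCast]

theorem hasDerivAt_logGammaSeq (N : ℕ) {z : ℂ} (hz : z ∈ slitPlane) :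
    HasDerivAt (logGammaSeq N) (Real.log N - ∑ k ∈ range (N + 1), (z + k)⁻¹) z := by
  have hlog (k : ℕ) : HasDerivAt (fun w ↦ log (w + k)) (z + k)⁻¹ z := by
    simpa using ((hasDerivAt_id z).add_const (k : ℂ)).clog (add_natCast_mem_slitPlane hz k)
  have hlin := ((hasDerivAt_id' z).mul_const (Real.log N : ℂ)).add_const (Real.log N.factorial : ℂ)
  have h := hlin.fun_sub (HasDerivAt.fun_sum (u := range (N + 1)) fun k _ ↦ hlog k)
  rwa [one_mul] at h

theorem differentiableOn_logGammaSeq (N : ℕ) : DifferentiableOn ℂ (logGammaSeq N) slitPlane :=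
  fun _ hz ↦ (hasDerivAt_logGammaSeq N hz).differentiableAt.differentiableWithinAt

theorem iteratedDeriv_succ_logGammaSeq {n : ℕ} (hn : n ≠ 0) (N : ℕ) {z : ℂ}
    (hz : z ∈ slitPlane) :
    iteratedDeriv (n + 1) (logGammaSeq N) z =
      (-1) ^ (n + 1) * n.factorial * ∑ k ∈ range (N + 1), ((z + k) ^ (n + 1))⁻¹ := by
  have hderiv : Set.EqOn (deriv (logGammaSeq N))
      (fun w ↦ Real.log N - ∑ k ∈ range (N + 1), (w + k)⁻¹) slitPlane :=
    fun w hw ↦ (hasDerivAt_logGammaSeq N hw).deriv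
  have hsmooth (k : ℕ) : ContDiffAt ℂ n (fun w : ℂ ↦ (w + k)⁻¹) z :=
    (contDiffAt_id.add contDiffAt_const).inv (slitPlane_ne_zero (add_natCast_mem_slitPlane hz k))
  rw [iteratedDeriv_succ', hderiv.iteratedDeriv_of_isOpen isOpen_slitPlane n hz,
    iteratedDeriv_const_sub (Nat.pos_of_ne_zero hn), iteratedDeriv_neg,
    iteratedDeriv_fun_sum fun k _ ↦ hsmooth k, mul_sum, ← sum_neg_distrib]
  refine sum_congr rfl fun k _ ↦ ?_
  rw [iteratedDeriv_inv_add_const]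
  ring

theorem logGammaSeq_succ_sub (N : ℕ) {z : ℂ} (hz : 1 + z / (N + 1) ≠ 0) :
    logGammaSeq (N + 1) z - logGammaSeq N z =
      z * (Real.log (N + 1) - Real.log N - ((N : ℝ) + 1)⁻¹ : ℝ) -
        (log (1 + z / (N + 1)) - z / (N + 1)) := by
  have hN : (0 : ℝ) < N + 1 := by positivity
  have hlog : log (z + (N + 1)) = Real.log (N + 1) + log (1 + z / (N + 1)) := by
    rw [← log_ofReal_mul hN hz]
    congr 1
    push_cast
    field_simp
    ring
  have hfact : Real.log (N + 1).factorial = Real.log (N + 1) + Real.log N.factorial := by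
    rw [Nat.factorial_succ, Nat.cast_mul, Real.log_mul (by positivity) (by positivity)]
    push_cast
    ring
  simp only [logGammaSeq, sum_range_succ, hfact]
  push_cast
  rw [hlog]
  field_simp
  ring

theorem norm_logGammaSeq_succ_sub_le {R : ℝ} {z : ℂ} (hz : ‖z‖ ≤ R) {N : ℕ} (hN : 0 < N)
    (hNR : 2 * R ≤ N) :
    ‖logGammaSeq (N + 1) z - logGammaSeq N z‖ ≤ (R + R ^ 2) * ((N : ℝ) ^ 2)⁻¹ := by
  have hN0 : (0 : ℝ) < N := Nat.cast_pos.mpr hN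
  set w := z / (N + 1)
  have hw : ‖w‖ ≤ R / N := by
    rw [norm_div, show ((N : ℂ) + 1) = ((N + 1 : ℝ) : ℂ) by push_cast; rfl, norm_real,
      Real.norm_of_nonneg (by positivity)]
    exact div_le_div₀ ((norm_nonneg z).trans hz) hz hN0 (by linarith)
  have hw_half : ‖w‖ ≤ 1 / 2 := hw.trans (by rw [div_le_iff₀ hN0]; linarith)
  have hw1 : ‖w‖ < 1 := by linarith
  have hquad : ‖log (1 + w) - w‖ ≤ ‖w‖ ^ 2 := by
    refine (norm_log_one_add_sub_self_le hw1).trans ?_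
    have : (1 - ‖w‖)⁻¹ ≤ 2 := by rw [inv_le_comm₀ (by linarith) two_pos]; linarith
    nlinarith [sq_nonneg ‖w‖]
  have h1w : 1 + w ≠ 0 := by
    intro h
    rw [show w = -1 by linear_combination h, norm_neg, norm_one] at hw1
    exact lt_irrefl _ hw1
  rw [logGammaSeq_succ_sub N h1w]
  calc _ ≤ ‖z‖ * ((N : ℝ) ^ 2)⁻¹ + ‖w‖ ^ 2 := by
        refine (norm_sub_le _ _).trans (add_le_add ?_ hquad)
        rw [norm_mul, norm_real, Real.norm_eq_abs]
        gcongr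
        exact Real.abs_log_add_one_sub_log_sub_inv_le hN0
    _ ≤ R * ((N : ℝ) ^ 2)⁻¹ + (R / N) ^ 2 := by gcongr
    _ = (R + R ^ 2) * ((N : ℝ) ^ 2)⁻¹ := by ring

theorem exists_tendstoLocallyUniformlyOn_logGammaSeq :
    ∃ L : ℂ → ℂ, TendstoLocallyUniformlyOn logGammaSeq L atTop slitPlane := by
  refine exists_tendstoLocallyUniformlyOn_of_norm_succ_sub_le isOpen_slitPlane fun K _ hK ↦ ?_
  obtain ⟨R, hR⟩ := hK.isBounded.subset_closedBall 0
  refine ⟨fun N ↦ (R + R ^ 2) * ((N : ℝ) ^ 2)⁻¹,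
    (Real.summable_nat_pow_inv.mpr one_lt_two).mul_left _, ?_⟩
  filter_upwards [eventually_gt_atTop 0, eventually_ge_atTop ⌈2 * R⌉₊] with N hN hNR z hzK
  exact norm_logGammaSeq_succ_sub_le (by simpa using hR hzK) hN (Nat.ceil_le.mp hNR)

theorem Gamma_eq_exp_of_tendsto_logGammaSeq {z L : ℂ} (hz : ∀ m : ℕ, z ≠ -m)
    (hL : Tendsto (logGammaSeq · z) atTop (𝓝 L)) : Gamma z = exp L := by
  refine tendsto_nhds_unique (GammaSeq_tendsto_Gamma z)
    (((continuous_exp.tendsto L).comp hL).congr' ?_)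
  filter_upwards [eventually_ne_atTop 0] with N hN using exp_logGammaSeq hN hz

theorem digamma_eqOn_deriv_of_tendstoLocallyUniformlyOn {L : ℂ → ℂ}
    (hL : TendstoLocallyUniformlyOn logGammaSeq L atTop slitPlane) :
    Set.EqOn digamma (deriv L) slitPlane := by
  have hLd : DifferentiableOn ℂ L slitPlane :=
    hL.differentiableOn (.of_forall differentiableOn_logGammaSeq) isOpen_slitPlane
  have hΓ : Set.EqOn Gamma (exp ∘ L) slitPlane := fun z hz ↦
    Gamma_eq_exp_of_tendsto_logGammaSeq (ne_neg_natCast_of_mem_slitPlane hz) (hL.tendsto_at hz)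
  intro z hz
  have hnhds := isOpen_slitPlane.mem_nhds hz
  rw [digamma_def, (logDeriv_congr_nhds (hΓ.eventuallyEq_of_mem hnhds)).eq_of_nhds,
    logDeriv_comp differentiableAt_exp (hLd.differentiableAt hnhds), logDeriv_exp, Pi.one_apply,
    one_mul]

theorem iteratedDeriv_digamma_eq_tsum {n : ℕ} (hn : n ≠ 0) {z : ℂ} (hz : z ∈ slitPlane) :
    iteratedDeriv n digamma z =
      (-1) ^ (n + 1) * n.factorial * ∑' k : ℕ, ((z + k) ^ (n + 1))⁻¹ := by
  obtain ⟨L, hL⟩ := exists_tendstoLocallyUniformlyOn_logGammaSeq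
  rw [(digamma_eqOn_deriv_of_tendstoLocallyUniformlyOn hL).iteratedDeriv_of_isOpen
    isOpen_slitPlane n hz, ← iteratedDeriv_succ']
  have hderivs :=
    hL.iteratedDeriv (.of_forall differentiableOn_logGammaSeq) isOpen_slitPlane (n + 1)
  refine tendsto_nhds_unique (hderivs.tendsto_at hz) ?_
  have hpartial := (summable_inv_add_natCast_pow (m := n + 1) (by omega) z).hasSum.tendsto_sum_nat
  have hsum := (hpartial.comp (tendsto_add_atTop_nat 1)).const_mul
    ((-1) ^ (n + 1) * n.factorial : ℂ)
  simpa only [iteratedDeriv_succ_logGammaSeq hn _ hz, Function.comp_def] using hsum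

theorem stmt_2 (n : ℕ) (hn : 1 ≤ n) (z : ℂ) (hz : ¬(z.im = 0 ∧ z.re ≤ 0)) :
    ∑' k : ℕ, (z + k) ^ (-((n : ℂ) + 1)) =
      ((-1) ^ (n + 1) / (n.factorial : ℂ)) * iteratedDeriv n digammaC z := by
  have hz' : z ∈ slitPlane := by
    rw [mem_slitPlane_iff, ← not_le, ← not_and_or, and_comm]
    exact hz
  have hcpow (k : ℕ) : (z + k) ^ (-((n : ℂ) + 1)) = ((z + k) ^ (n + 1))⁻¹ := by
    rw [cpow_neg, ← Nat.cast_add_one, cpow_natCast]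
  rw [tsum_congr hcpow, show digammaC = digamma from rfl,
    iteratedDeriv_digamma_eq_tsum (by omega) hz']
  have hsign : ((-1 : ℂ) ^ (n + 1)) ^ 2 = 1 := by
    rw [← pow_mul, mul_comm, pow_mul, neg_one_sq, one_pow]
  field_simp
  rw [hsign, mul_one, mul_div_cancel_right₀ _ (Nat.cast_ne_zero.mpr n.factorial_ne_zero)]
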